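/- Let n ≥ 1, t, s > 0, and let f : ℝⁿ → ℝ be a bounded continuous function. Then for every x ∈ ℝⁿ, P_t(Q_s f)(x) ≤ Q_{e^{2t} s}(P_t f)(x), where P_t is the Ornstein–Uhlenbeck semigroup (which satisfies the curvature condition CD(1,∞)). -/

import Mathlib

open MeasureTheory Real

/-- The standard Gaussian probability measure on ℝⁿ. -/
noncomputable def gaussMeasure (n : ℕ) : Measure (EuclideanSpace ℝ (Fin n)) :=
  volume.withDensity
    (fun z => ENNReal.ofReal ((2 * π) ^ (-(n : ℝ) / 2) * Real.exp (-‖z‖ ^ 2 / 2)))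

/-- The Ornstein–Uhlenbeck semigroup via the Mehler formula:
`P_t f(x) = ∫ f(e^{-t} x + √(1-e^{-2t}) z) dγ(z)`. -/
noncomputable def ouSG (n : ℕ) (t : ℝ) (f : EuclideanSpace ℝ (Fin n) → ℝ)
    (x : EuclideanSpace ℝ (Fin n)) : ℝ :=
  ∫ z, f (Real.exp (-t) • x + Real.sqrt (1 - Real.exp (-2 * t)) • z) ∂(gaussMeasure n)

/-- The Hopf–Lax infimum-convolution semigroup:
`Q_s f(x) = inf_y [ f(y) + ‖x-y‖²/(2s) ]`. -/
noncomputable def hopfLax (n : ℕ) (s : ℝ) (f : EuclideanSpace ℝ (Fin n) → ℝ)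
    (x : EuclideanSpace ℝ (Fin n)) : ℝ :=
  ⨅ y : EuclideanSpace ℝ (Fin n), (f y + ‖x - y‖ ^ 2 / (2 * s))

set_option maxHeartbeats 2000000 in
lemma gauss_density_integrable (n : ℕ) :
    Integrable (fun z : EuclideanSpace ℝ (Fin n) => Real.exp (-‖z‖ ^ 2 / 2)) := by
  have h := (GaussianFourier.integrable_cexp_neg_mul_sq_norm_add
      (V := EuclideanSpace ℝ (Fin n)) (b := (1/2 : ℂ)) (by norm_num) 0 0).norm
  refine h.congr ?_
  filter_upwards with v
  simp [Complex.norm_exp, ← Complex.ofReal_pow]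
  ring_nf

lemma gauss_density_integral (n : ℕ) :
    ∫ z : EuclideanSpace ℝ (Fin n), Real.exp (-‖z‖ ^ 2 / 2) = (2 * π) ^ ((n : ℝ) / 2) := by
  have h := GaussianFourier.integral_rexp_neg_mul_sq_norm
      (V := EuclideanSpace ℝ (Fin n)) (b := (1/2 : ℝ)) (by norm_num)
  simp only [finrank_euclideanSpace_fin] at h
  rw [show (2 * π : ℝ) = π / (1/2) by ring, ← h]
  congr 1
  ext v
  ring_nf

instance gauss_prob (n : ℕ) : IsProbabilityMeasure (gaussMeasure n) := by
  constructor
  rw [gaussMeasure, withDensity_apply _ MeasurableSet.univ, setLIntegral_univ]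
  rw [← ofReal_integral_eq_lintegral_ofReal
      (((gauss_density_integrable n).const_mul _)) (ae_of_all _ fun z => by positivity)]
  rw [integral_const_mul, gauss_density_integral n, ← Real.rpow_add (by positivity),
    show (-(n:ℝ)/2 + n/2) = 0 by ring, Real.rpow_zero]
  norm_num

lemma iInf_denseRange_eq {α : Type*} [PseudoMetricSpace α] {u : ℕ → α} (hu : DenseRange u)
    {g : α → ℝ} (hg : Continuous g) {c : ℝ} (hc : ∀ w, c ≤ g w) :
    ⨅ y, g y = ⨅ k, g (u k) := by
  haveI : Nonempty α := ⟨u 0⟩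
  have hb : BddBelow (Set.range g) := ⟨c, by rintro _ ⟨w, rfl⟩; exact hc w⟩
  have hb2 : BddBelow (Set.range fun k => g (u k)) := ⟨c, by rintro _ ⟨k, rfl⟩; exact hc (u k)⟩
  refine le_antisymm (le_ciInf fun k => ciInf_le hb (u k)) (le_ciInf fun y => ?_)
  refine le_of_forall_pos_le_add fun ε hε => ?_
  obtain ⟨δ, hδ, hδ'⟩ := Metric.continuousAt_iff.1 (hg.continuousAt (x := y)) ε hε
  obtain ⟨k, hk⟩ := hu.exists_dist_lt y hδ
  have h3 := hδ' (by rwa [dist_comm])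
  rw [Real.dist_eq, abs_sub_lt_iff] at h3
  have h4 : (⨅ k, g (u k)) ≤ g (u k) := ciInf_le hb2 k
  linarith [h3.1]

section hl

variable {n : ℕ} {s : ℝ} {f : EuclideanSpace ℝ (Fin n) → ℝ} {C : ℝ}

lemma hl_bddBelow (hs : 0 < s) (hfC : ∀ z, |f z| ≤ C) (x : EuclideanSpace ℝ (Fin n)) :
    BddBelow (Set.range fun y => f y + ‖x - y‖ ^ 2 / (2 * s)) := by
  refine ⟨-C, ?_⟩
  rintro _ ⟨y, rfl⟩
  have h1 := (abs_le.1 (hfC y)).1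
  have h2 : (0:ℝ) ≤ ‖x - y‖ ^ 2 / (2 * s) := by positivity
  linarith

lemma hl_le (hs : 0 < s) (hfC : ∀ z, |f z| ≤ C) (x : EuclideanSpace ℝ (Fin n)) :
    hopfLax n s f x ≤ C := by
  have := ciInf_le (hl_bddBelow hs hfC x) x
  simpa [hopfLax] using this.trans (by simpa using (abs_le.1 (hfC x)).2)

lemma neg_le_hl (hs : 0 < s) (hfC : ∀ z, |f z| ≤ C) (x : EuclideanSpace ℝ (Fin n)) :
    -C ≤ hopfLax n s f x := by
  refine le_ciInf fun y => ?_
  have h1 := (abs_le.1 (hfC y)).1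
  have h2 : (0:ℝ) ≤ ‖x - y‖ ^ 2 / (2 * s) := by positivity
  linarith

lemma hl_measurable (hs : 0 < s) (hf : Continuous f) (hfC : ∀ z, |f z| ≤ C) :
    Measurable (hopfLax n s f) := by
  set u := TopologicalSpace.denseSeq (EuclideanSpace ℝ (Fin n)) with hu
  have hrep : hopfLax n s f = fun x => ⨅ k : ℕ, (f (u k) + ‖x - u k‖ ^ 2 / (2 * s)) := by
    funext x
    exact iInf_denseRange_eq (TopologicalSpace.denseRange_denseSeq _)
      (hf.add (((continuous_const.sub continuous_id).norm.pow 2).div_const _)) (c := -C)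
      (fun w => by
        have h1 := (abs_le.1 (hfC w)).1
        have h2 : (0:ℝ) ≤ ‖x - w‖ ^ 2 / (2 * s) := by positivity
        linarith)
  rw [hrep]
  exact Measurable.iInf fun k =>
    (continuous_const.add
      (((continuous_id.sub continuous_const).norm.pow 2).div_const _)).measurable

end hl

set_option maxHeartbeats 2000000 in
/-- Commutation between the Ornstein–Uhlenbeck and Hopf–Lax semigroups
(curvature `CD(1,∞)`): `P_t(Q_s f) ≤ Q_{e^{2t} s}(P_t f)`. -/
theorem ou_hopfLax_commutation (n : ℕ) (hn : 1 ≤ n) (t s : ℝ) (ht : 0 < t) (hs : 0 < s)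
    (f : EuclideanSpace ℝ (Fin n) → ℝ) (hf : Continuous f)
    (C : ℝ) (hfC : ∀ z, |f z| ≤ C) (x : EuclideanSpace ℝ (Fin n)) :
    ouSG n t (hopfLax n s f) x ≤ hopfLax n (Real.exp (2 * t) * s) (ouSG n t f) x := by
  set a := Real.exp (-t) with ha
  set σ := Real.sqrt (1 - Real.exp (-2 * t)) with hσ
  have hQb : ∀ w, |hopfLax n s f w| ≤ C := fun w =>
    abs_le.2 ⟨neg_le_hl hs hfC w, hl_le hs hfC w⟩
  have hQm : Measurable (hopfLax n s f) := hl_measurable hs hf hfC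
  have hexp : a ^ 2 = (Real.exp (2 * t))⁻¹ := by
    rw [ha, ← Real.exp_neg, sq, ← Real.exp_add]
    ring_nf
  refine le_ciInf fun y => ?_
  -- pointwise key inequality
  have key : ∀ z : EuclideanSpace ℝ (Fin n),
      hopfLax n s f (a • x + σ • z)
        ≤ f (a • y + σ • z) + ‖x - y‖ ^ 2 / (2 * (Real.exp (2 * t) * s)) := by
    intro z
    have h1 : hopfLax n s f (a • x + σ • z)
        ≤ f (a • y + σ • z) + ‖(a • x + σ • z) - (a • y + σ • z)‖ ^ 2 / (2 * s) :=
      ciInf_le (hl_bddBelow hs hfC _) _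
    refine h1.trans ?_
    have hsub : (a • x + σ • z) - (a • y + σ • z) = a • (x - y) := by module
    have hnorm : ‖(a • x + σ • z) - (a • y + σ • z)‖ = a * ‖x - y‖ := by
      rw [hsub, norm_smul, Real.norm_eq_abs, abs_of_pos (Real.exp_pos _)]
    rw [hnorm]
    have heq : (a * ‖x - y‖) ^ 2 / (2 * s) = ‖x - y‖ ^ 2 / (2 * (Real.exp (2 * t) * s)) := by
      rw [mul_pow, hexp, inv_mul_eq_div, div_div]
      ring
    rw [heq]
  -- integrability
  have hmz : Continuous fun z : EuclideanSpace ℝ (Fin n) => a • x + σ • z :=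
    continuous_const.add (continuous_const_smul σ)
  have hmy : Continuous fun z : EuclideanSpace ℝ (Fin n) => a • y + σ • z :=
    continuous_const.add (continuous_const_smul σ)
  have hint1 : Integrable (fun z => hopfLax n s f (a • x + σ • z)) (gaussMeasure n) := by
    refine ⟨(hQm.comp hmz.measurable).aestronglyMeasurable, ?_⟩
    exact HasFiniteIntegral.of_bounded (C := C)
      (ae_of_all _ fun z => by simpa [Real.norm_eq_abs] using hQb _)
  have hint2 : Integrable (fun z => f (a • y + σ • z)) (gaussMeasure n) := by
    refine ⟨(hf.comp hmy).measurable.aestronglyMeasurable, ?_⟩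
    exact HasFiniteIntegral.of_bounded (C := C)
      (ae_of_all _ fun z => by simpa [Real.norm_eq_abs] using hfC _)
  have hmono := integral_mono hint1 (hint2.add (integrable_const _)) key
  simp only [Pi.add_apply] at hmono
  rw [integral_add hint2 (integrable_const _), integral_const, probReal_univ,
    one_smul] at hmono
  exact hmono
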